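/- The product ℤ^(ℤ^ℕ) of copies of the discrete group ℤ indexed by a set of cardinality continuum contains a countable closed subgroup H that is not reflexive: the canonical evaluation map α_H : H → H^^ into the second Pontryagin dual of H (where H carries the subspace topology) is not a topological isomorphism. -/

import Mathlib

/-!
`H = Hom(ℤ^ℕ, ℤ)` is closed in `ℤ^(ℤ^ℕ)`, being the set of additive functions. By Specker's
lemma a homomorphism `ℤ^ℕ → ℤ` depends on finitely many coordinates only, so `H ≅ ⊕_ℕ ℤ` is
countable and its elements are continuous on `ℤ^ℕ`; Baire's theorem then bounds the supports of
the elements of a compact subset of `H` uniformly. Hence the characters `h ↦ h(eₙ) • t` of `H`,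
together with `0`, form a compact subset `K` of `H^`. Since the circle is divisible and has no
small subgroups, the only element of `H^^` mapping `K` into the ball of radius `1/4` is `0`, so
`H^^` is discrete. But `H` is not: every finite subset of `ℤ^ℕ` is annihilated by a nonzero
element of `H`.
-/

/-- The Pontryagin dual of a topological abelian group: the group of continuous
homomorphisms to the circle group `ℝ/ℤ`, with the compact-open topology. -/
abbrev PontDual (A : Type*) [AddMonoid A] [TopologicalSpace A] : Type _ :=
  ContinuousAddMonoidHom A (AddCircle (1 : ℝ))

open Filter Topology Finset

theorem AddMonoidHom.dvd_apply_of_forall_dvd {ι : Type*} (φ : (ι → ℤ) →+ ℤ) {d : ℤ}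
    {x : ι → ℤ} (h : ∀ i, d ∣ x i) : d ∣ φ x := by
  obtain ⟨y, rfl⟩ : ∃ y, x = d • y :=
    ⟨fun i => x i / d, funext fun i => (Int.mul_ediv_cancel' (h i)).symm⟩
  rw [map_zsmul, smul_eq_mul]
  exact dvd_mul_right _ _

namespace Specker

theorem exists_dvd_chain_dominating (t : ℕ → ℤ) :
    ∃ D : ℕ → ℤ, (∀ k, 0 < D k) ∧ (∀ k, D k ∣ D (k + 1)) ∧
      ∀ K, |∑ k ∈ range K, D k * t k| + K < D K := by
  -- the pair `(∑ k < K, D k * t k, D K)`, built by recursion on `K`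
  let SD : ℕ → ℤ × ℤ := fun K => Nat.rec (0, 1)
    (fun K p => (p.1 + p.2 * t K, p.2 * (|p.1 + p.2 * t K| + K + 2))) K
  have hS : ∀ K, (SD K).1 = ∑ k ∈ range K, (SD k).2 * t k := by
    intro K
    induction K with
    | zero => rfl
    | succ K ih => rw [sum_range_succ, ← ih]
  have hpos : ∀ K, 0 < (SD K).2 := by
    intro K
    induction K with
    | zero => exact one_pos
    | succ K ih => exact mul_pos ih (by positivity)
  refine ⟨fun K => (SD K).2, hpos, fun K => dvd_mul_right _ _, fun K => ?_⟩
  rw [← hS]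
  cases K with
  | zero => simp [SD]
  | succ K =>
    change |(SD (K + 1)).1| + ((K + 1 : ℕ) : ℤ) < (SD K).2 * (|(SD (K + 1)).1| + K + 2)
    have := hpos K
    push_cast
    nlinarith [abs_nonneg (SD (K + 1)).1]

theorem eventually_eq_zero_of_dvd_sub_sum {D t : ℕ → ℤ} {m : ℤ} (hD : ∀ k, 0 < D k)
    (hdom : ∀ K, |∑ k ∈ range K, D k * t k| + K < D K)
    (hdvd : ∀ K, D K ∣ m - ∑ k ∈ range K, D k * t k) : ∀ᶠ K in atTop, t K = 0 := by
  have hsum : ∀ K : ℕ, |m| < K → ∑ k ∈ range K, D k * t k = m := fun K hK =>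
    (sub_eq_zero.1 (Int.eq_zero_of_abs_lt_dvd (hdvd K) (by
      have := abs_sub m (∑ k ∈ range K, D k * t k)
      linarith [hdom K]))).symm
  obtain ⟨K₀, hK₀⟩ := exists_nat_gt |m|
  filter_upwards [eventually_ge_atTop K₀] with K hK
  have h₁ := hsum K (by omega)
  have h₂ := hsum (K + 1) (by push_cast; omega)
  rw [sum_range_succ, h₁, add_eq_left] at h₂
  exact (mul_eq_zero.1 h₂).resolve_left (hD K).ne'

theorem eventually_map_eq_zero (φ : (ℕ → ℤ) →+ ℤ) {v : ℕ → ℕ → ℤ}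
    (hv : ∀ k m, m < k → v k m = 0) : ∀ᶠ k in atTop, φ (v k) = 0 := by
  obtain ⟨D, hDpos, hDdvd, hdom⟩ := exists_dvd_chain_dominating fun k => φ (v k)
  -- `z = ∑ k, D k • v k` makes sense coordinatewise, since `v k m = 0` for `k > m`
  let z : ℕ → ℤ := fun m => ∑ k ∈ range (m + 1), D k * v k m
  refine eventually_eq_zero_of_dvd_sub_sum hDpos hdom (m := φ z) fun K => ?_
  have hrw : φ z - ∑ k ∈ range K, D k * φ (v k) = φ (z - ∑ k ∈ range K, D k • v k) := by
    simp only [map_sub, map_sum, map_zsmul, smul_eq_mul]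
  rw [hrw]
  refine φ.dvd_apply_of_forall_dvd fun m => ?_
  have hz : z m = ∑ k ∈ range (max (m + 1) K), D k * v k m :=
    sum_subset (range_subset_range.2 (le_max_left _ _)) fun k _ hk => by
      rw [hv k m (by simp at hk; omega), mul_zero]
  simp only [Pi.sub_apply, Finset.sum_apply, Pi.smul_apply, smul_eq_mul, hz]
  rw [← sum_range_add_sum_Ico _ (le_max_right (m + 1) K), add_sub_cancel_left]
  exact dvd_sum fun k hk =>
    (Nat.rel_of_forall_rel_succ_of_le (· ∣ ·) hDdvd (mem_Ico.1 hk).1).mul_right _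

theorem eventually_map_single_eq_zero (φ : (ℕ → ℤ) →+ ℤ) :
    ∀ᶠ n in atTop, φ (Pi.single n 1) = 0 :=
  eventually_map_eq_zero φ fun _ _ hm => Pi.single_eq_of_ne hm.ne 1

theorem map_eq_sum (φ : (ℕ → ℤ) →+ ℤ) {N : ℕ} (hN : ∀ n ≥ N, φ (Pi.single n 1) = 0)
    (x : ℕ → ℤ) : φ x = ∑ n ∈ range N, x n * φ (Pi.single n 1) := by
  let tail : ℕ → ℕ → ℤ := fun k m => if m < k then 0 else x m
  obtain ⟨k, hk⟩ := ((eventually_map_eq_zero φ (v := tail) fun k m hm => if_pos hm).and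
    (eventually_ge_atTop N)).exists
  have hx : x = ∑ n ∈ range k, x n • Pi.single n 1 + tail k := by
    funext m
    by_cases hm : m < k <;> simp [tail, Finset.sum_apply, Pi.single_apply, hm]
  calc φ x = ∑ n ∈ range k, x n * φ (Pi.single n 1) := by
        conv_lhs => rw [hx]
        simp only [map_add, map_sum, map_zsmul, hk.1, add_zero, smul_eq_mul]
    _ = ∑ n ∈ range N, x n * φ (Pi.single n 1) :=
        (sum_subset (range_subset_range.2 hk.2) fun n _ hn => by
          rw [hN n (by simpa using hn), mul_zero]).symm

theorem hom_ext {φ ψ : (ℕ → ℤ) →+ ℤ} (h : ∀ n, φ (Pi.single n 1) = ψ (Pi.single n 1)) :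
    φ = ψ := by
  obtain ⟨N, hN⟩ := ((eventually_map_single_eq_zero φ).and
    (eventually_map_single_eq_zero ψ)).exists_forall_of_atTop
  ext x
  rw [map_eq_sum φ (fun n hn => (hN n hn).1), map_eq_sum ψ (fun n hn => (hN n hn).2)]
  simp only [h]

theorem countable_hom : Countable ((ℕ → ℤ) →+ ℤ) := by
  have hfin (φ : (ℕ → ℤ) →+ ℤ) : (Function.support fun n => φ (Pi.single n 1)).Finite :=
    Filter.eventually_cofinite.1 (Nat.cofinite_eq_atTop ▸ eventually_map_single_eq_zero φ)
  exact Function.Injective.countable (f := fun φ => Finsupp.ofSupportFinite _ (hfin φ))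
    fun φ ψ hφψ => hom_ext fun n => DFunLike.congr_fun hφψ n

theorem continuous_map (φ : (ℕ → ℤ) →+ ℤ) : Continuous φ := by
  obtain ⟨N, hN⟩ := (eventually_map_single_eq_zero φ).exists_forall_of_atTop
  rw [show ⇑φ = fun x => ∑ n ∈ range N, x n * φ (Pi.single n 1) from funext (map_eq_sum φ hN)]
  fun_prop

theorem exists_forall_map_single_eq_zero {ι : Type*} (φ : ι → (ℕ → ℤ) →+ ℤ)
    (hφ : ∀ x, BddAbove (Set.range fun i => |φ i x|)) :
    ∃ N, ∀ i, ∀ n ≥ N, φ i (Pi.single n 1) = 0 := by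
  let F : ℕ → Set (ℕ → ℤ) := fun M => {x | ∀ i, |φ i x| ≤ M}
  have hF : ∀ M, IsClosed (F M) := fun M => by
    simp only [F, Set.ofPred_forall]
    exact isClosed_iInter fun i =>
      isClosed_le (continuous_abs.comp (continuous_map (φ i))) continuous_const
  have hcover : ⋃ M, F M = Set.univ := Set.eq_univ_of_forall fun x => by
    obtain ⟨C, hC⟩ := hφ x
    exact Set.mem_iUnion.2 ⟨C.toNat, fun i =>
      (hC (Set.mem_range_self i)).trans (Int.self_le_toNat C)⟩
  -- Baire: some `F M` contains a cylinder `{x | ∀ m < N, x m = x₀ m}`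
  obtain ⟨M, x₀, hx₀⟩ := nonempty_interior_of_iUnion_of_closed hF hcover
  obtain ⟨-, ⟨y, N, rfl⟩, hx₀y, hsub⟩ :=
    (PiNat.isTopologicalBasis_cylinders _).mem_nhds_iff.1 (mem_interior_iff_mem_nhds.1 hx₀)
  rw [← PiNat.mem_cylinder_iff_eq.1 hx₀y] at hsub
  refine ⟨N, fun i n hn => ?_⟩
  have hbound (k : ℤ) : |φ i x₀ + k * φ i (Pi.single n 1)| ≤ M := by
    have hmem : x₀ + k • Pi.single n 1 ∈ PiNat.cylinder x₀ N := fun m hm => by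
      simp [Pi.single_eq_of_ne (show m ≠ n by omega)]
    simpa only [map_add, map_zsmul, smul_eq_mul] using hsub hmem i
  by_contra hne
  have h₁ : |φ i x₀| ≤ M := by simpa using hbound 0
  have h₂ := hbound (2 * M + 1)
  have h₃ := abs_sub (φ i x₀ + (2 * M + 1) * φ i (Pi.single n 1)) (φ i x₀)
  rw [add_sub_cancel_left, abs_mul, abs_of_pos (by positivity : (0 : ℤ) < 2 * M + 1)] at h₃
  nlinarith [Int.one_le_abs hne]

end Specker

theorem AddCircle.eq_zero_of_forall_norm_zsmul_lt {u : AddCircle (1 : ℝ)}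
    (h : ∀ k : ℤ, ‖k • u‖ < 1 / 4) : u = 0 := by
  obtain ⟨x, rfl⟩ := QuotientAddGroup.mk_surjective u
  set r := x - round x
  have hr : ((r : ℝ) : AddCircle (1 : ℝ)) = x := by simp [r]
  have hnorm (k : ℤ) (hk : |k * r| ≤ 1 / 2) : ‖k • (x : AddCircle (1 : ℝ))‖ = |k * r| := by
    rw [← hr, ← AddCircle.coe_zsmul, zsmul_eq_mul, AddCircle.norm_coe_eq_abs_iff _ one_ne_zero]
    simpa using hk
  have hr₁ : |r| < 1 / 4 := by
    have h₁ := h 1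
    rwa [hnorm 1 (by simpa using abs_sub_round x), Int.cast_one, one_mul] at h₁
  by_contra hx
  have hr₀ : 0 < |r| := abs_pos.2 fun h0 => hx (by rw [← hr, h0]; rfl)
  -- the first multiple of `|r|` reaching `1/4` stays below `1/2`
  set k := ⌈1 / (4 * |r|)⌉
  have hk₀ : (0 : ℝ) ≤ k := by positivity
  have hk₁ : 1 / 4 ≤ k * |r| := by
    have := Int.le_ceil (1 / (4 * |r|))
    rw [div_le_iff₀ (by positivity)] at this
    linarith
  have hk₂ : k * |r| < 1 / 2 := by
    have hceil := Int.ceil_lt_add_one (1 / (4 * |r|))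
    have : (k : ℝ) * |r| < (1 / (4 * |r|) + 1) * |r| := by gcongr
    have hquarter : 1 / (4 * |r|) * |r| = 1 / 4 := by field_simp
    linarith [add_mul (1 / (4 * |r|)) 1 |r|]
  have habs : |(k : ℝ) * r| = k * |r| := by rw [abs_mul, abs_of_nonneg hk₀]
  have := h k
  rw [hnorm k (by rw [habs]; exact hk₂.le), habs] at this
  linarith

namespace PontDual

variable {G : Type*} [AddMonoid G] [TopologicalSpace G]

def eval (g : G) : PontDual G →+ AddCircle (1 : ℝ) where
  toFun χ := χ g
  map_zero' := rfl
  map_add' _ _ := rfl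

@[simp]
theorem eval_apply (g : G) (χ : PontDual G) : eval g χ = χ g := rfl

theorem exists_isCompact_apply_eq_zero_of_eqOn (ψ : PontDual (PontDual G)) :
    ∃ W : Set G, IsCompact W ∧ ∀ χ : PontDual G, Set.EqOn χ 0 W → ψ χ = 0 := by
  have hψ : ψ ⁻¹' Metric.ball 0 (1 / 4) ∈ 𝓝 (0 : PontDual G) :=
    (map_continuous ψ).continuousAt.preimage_mem_nhds
      (by rw [map_zero]; exact Metric.ball_mem_nhds _ (by norm_num))
  rw [(ContinuousAddMonoidHom.isInducing_toContinuousMap _ _).nhds_eq_comap] at hψ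
  obtain ⟨S, hS, hSψ⟩ := mem_comap.1 hψ
  obtain ⟨⟨W, V⟩, ⟨hW, hV⟩, hWV⟩ :=
    (nhds_basis_uniformity' ContinuousMap.hasBasis_compactConvergenceUniformity).mem_iff.1 hS
  -- the characters vanishing on `W` form a subgroup, mapped by `ψ` into the ball of radius `1/4`
  refine ⟨W, hW, fun χ hχ => AddCircle.eq_zero_of_forall_norm_zsmul_lt fun k => ?_⟩
  have hkχ : k • χ ∈ ψ ⁻¹' Metric.ball 0 (1 / 4) := hSψ <| hWV fun g hg => by
    have h0 : (k • χ) g = 0 := by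
      rw [← eval_apply, map_zsmul, eval_apply, hχ hg, Pi.zero_apply, smul_zero]
    simpa [h0] using refl_mem_uniformity hV
  simpa [map_zsmul] using hkχ

end PontDual

theorem exists_eq_sum_zsmul_of_injective {G A ι : Type*} [AddCommGroup G] [AddCommGroup A]
    [DivisibleBy A ℤ] [Fintype ι] (π : G →+ (ι → ℤ)) (hπ : Function.Injective π)
    (χ : G →+ A) : ∃ t : ι → A, ∀ g, χ g = ∑ i, π g i • t i := by
  classical
  obtain ⟨f, rfl⟩ := (Module.Baer.of_divisible A).extension_property_addMonoidHom π hπ χ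
  exact ⟨fun i => f fun j => if i = j then 1 else 0,
    fun g => f.toIntLinearMap.pi_apply_eq_sum_univ (π g)⟩

/-- `Hom(ℤ^ℕ, ℤ)`, as a subgroup of `ℤ^(ℤ^ℕ)`. -/
def baerSpeckerDual : AddSubgroup ((ℕ → ℤ) → ℤ) := (AddMonoidHom.coeFn (ℕ → ℤ) ℤ).range

namespace baerSpeckerDual

noncomputable def toHom (h : baerSpeckerDual) : (ℕ → ℤ) →+ ℤ := h.2.choose

@[simp]
theorem coe_toHom (h : baerSpeckerDual) : ⇑(toHom h) = h := h.2.choose_spec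

theorem toHom_injective : Function.Injective toHom := fun a b hab =>
  Subtype.ext (by rw [← coe_toHom a, hab, coe_toHom])

theorem isClosed : IsClosed (baerSpeckerDual : Set ((ℕ → ℤ) → ℤ)) := by
  rw [baerSpeckerDual, AddMonoidHom.coe_range]
  exact AddMonoidHom.isClosed_range_coe _ _

theorem countable : Countable baerSpeckerDual :=
  have := Specker.countable_hom
  toHom_injective.countable

theorem exists_forall_apply_single_eq_zero_of_isCompact {K : Set baerSpeckerDual}
    (hK : IsCompact K) : ∃ N, ∀ h ∈ K, ∀ n ≥ N, (h : (ℕ → ℤ) → ℤ) (Pi.single n 1) = 0 := by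
  obtain ⟨N, hN⟩ := Specker.exists_forall_map_single_eq_zero (fun h : K => toHom h) fun x => by
    have hc : Continuous fun h : baerSpeckerDual => |(h : (ℕ → ℤ) → ℤ) x| :=
      continuous_abs.comp ((continuous_apply x).comp continuous_subtype_val)
    simpa [Set.image_eq_range] using (hK.image hc).bddAbove
  exact ⟨N, fun h hh n hn => by simpa using hN ⟨h, hh⟩ n hn⟩

theorem exists_ne_zero_forall_mem_eq_zero (I : Finset (ℕ → ℤ)) :
    ∃ ℓ : (ℕ → ℤ) →+ ℤ, ℓ ≠ 0 ∧ ∀ x ∈ I, ℓ x = 0 := by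
  -- `#I + 1` vectors in `ℤ^I` are linearly dependent
  let v : Fin (I.card + 1) → (I → ℤ) := fun n x => x.1 n
  have hv : ¬ LinearIndependent ℤ v := fun hv => by
    simpa [Module.finrank_fintype_fun_eq_card] using hv.fintype_card_le_finrank
  obtain ⟨a, ha, n₀, hn₀⟩ := Fintype.not_linearIndependent_iff.1 hv
  refine ⟨∑ n, a n • Pi.evalAddMonoidHom (fun _ => ℤ) (n : ℕ), fun hℓ => hn₀ ?_,
    fun x hx => by simpa [v] using congr_fun ha ⟨x, hx⟩⟩
  simpa [Finset.sum_apply, Pi.single_apply, Fin.val_inj] using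
    DFunLike.congr_fun hℓ (Pi.single (n₀ : ℕ) 1)

theorem not_discreteTopology : ¬ DiscreteTopology baerSpeckerDual := fun _ => by
  obtain ⟨O, hO, hOeq⟩ := isOpen_induced_iff.1 (isOpen_discrete ({0} : Set baerSpeckerDual))
  obtain ⟨I, u, hu, hIu⟩ := isOpen_pi_iff.1 hO 0 (by simpa using congr_arg (0 ∈ ·) hOeq)
  obtain ⟨ℓ, hℓ, hℓI⟩ := exists_ne_zero_forall_mem_eq_zero I
  have hmem : (⟨ℓ, ℓ, rfl⟩ : baerSpeckerDual) ∈ Subtype.val ⁻¹' O :=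
    hIu fun x hx => by simpa [hℓI x hx] using (hu x hx).2
  rw [hOeq, Set.mem_singleton_iff] at hmem
  exact hℓ (DFunLike.coe_injective (congr_arg Subtype.val hmem))

def evalChar (x : ℕ → ℤ) (t : AddCircle (1 : ℝ)) : PontDual baerSpeckerDual where
  toFun h := (h : (ℕ → ℤ) → ℤ) x • t
  map_zero' := zero_smul ℤ t
  map_add' _ _ := add_smul _ _ t
  continuous_toFun := (continuous_of_discreteTopology (f := fun k : ℤ => k • t)).comp
    ((continuous_apply x).comp continuous_subtype_val)

@[simp]
theorem evalChar_apply (x : ℕ → ℤ) (t : AddCircle (1 : ℝ)) (h : baerSpeckerDual) :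
    evalChar x t h = (h : (ℕ → ℤ) → ℤ) x • t := rfl

theorem evalChar_zsmul (x : ℕ → ℤ) (k : ℤ) (t : AddCircle (1 : ℝ)) :
    evalChar x (k • t) = k • evalChar x t := by
  ext h
  rw [← PontDual.eval_apply h (k • _), map_zsmul, PontDual.eval_apply, evalChar_apply,
    evalChar_apply, smul_comm]

theorem continuous_evalChar (x : ℕ → ℤ) : Continuous (evalChar x) := by
  refine ContinuousAddMonoidHom.continuous_of_continuous_uncurry _ ?_
  have hx : Continuous fun h : baerSpeckerDual => (h : (ℕ → ℤ) → ℤ) x :=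
    (continuous_apply x).comp continuous_subtype_val
  exact continuous_smul.comp ((hx.comp continuous_snd).prodMk continuous_fst)

theorem tendsto_evalChar_single :
    Tendsto (fun p : AddCircle (1 : ℝ) × ℕ => evalChar (Pi.single p.2 1) p.1)
      (cocompact _) (𝓝 0) := by
  rw [← coprod_cocompact, cocompact_eq_bot, cocompact_eq_atTop, Filter.coprod, comap_bot,
    bot_sup_eq, (ContinuousAddMonoidHom.isInducing_toContinuousMap _ _).tendsto_nhds_iff,
    ContinuousMap.tendsto_nhds_compactOpen]
  intro K hK U _ h0
  obtain ⟨N, hN⟩ := exists_forall_apply_single_eq_zero_of_isCompact hK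
  filter_upwards [tendsto_comap.eventually (eventually_ge_atTop N)] with p hp h hh
  simpa [hN h hh p.2 hp] using h0 hh

theorem isCompact_evalChar_single : IsCompact (insert 0 (Set.range
    fun p : AddCircle (1 : ℝ) × ℕ => evalChar (Pi.single p.2 1) p.1)) :=
  tendsto_evalChar_single.isCompact_insert_range_of_cocompact
    (continuous_prod_of_discrete_right.2 fun n => continuous_evalChar (Pi.single n 1))

theorem exists_sum_evalChar_eq (χ : PontDual baerSpeckerDual) (N : ℕ) :
    ∃ t : Fin N → AddCircle (1 : ℝ), ∀ h : baerSpeckerDual,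
      (∀ n ≥ N, (h : (ℕ → ℤ) → ℤ) (Pi.single n 1) = 0) →
        χ h = ∑ i : Fin N, evalChar (Pi.single (i : ℕ) 1) (t i) h := by
  let ev (x : ℕ → ℤ) : baerSpeckerDual →+ ℤ :=
    (Pi.evalAddMonoidHom (fun _ => ℤ) x).comp baerSpeckerDual.subtype
  let S : AddSubgroup baerSpeckerDual := ⨅ n ≥ N, (ev (Pi.single n 1)).ker
  have hS (h : baerSpeckerDual) : h ∈ S ↔ ∀ n ≥ N, (h : (ℕ → ℤ) → ℤ) (Pi.single n 1) = 0 := by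
    simp [S, ev]
  let π : S →+ (Fin N → ℤ) :=
    (AddMonoidHom.pi fun i : Fin N => ev (Pi.single (i : ℕ) 1)).comp S.subtype
  have hπ : Function.Injective π := fun a b hab =>
    Subtype.ext <| toHom_injective <| Specker.hom_ext fun n => by
      rcases lt_or_ge n N with hn | hn
      · simpa [π, ev] using congr_fun hab ⟨n, hn⟩
      · simp [(hS a).1 a.2 n hn, (hS b).1 b.2 n hn]
  obtain ⟨t, ht⟩ := exists_eq_sum_zsmul_of_injective π hπ
    ((χ : baerSpeckerDual →+ AddCircle (1 : ℝ)).comp S.subtype)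
  exact ⟨t, fun h hh => by simpa [π, ev] using ht ⟨h, (hS h).2 hh⟩⟩

theorem eq_zero_of_forall_norm_apply_evalChar_lt (ψ : PontDual (PontDual baerSpeckerDual))
    (hψ : ∀ n t, ‖ψ (evalChar (Pi.single n 1) t)‖ < 1 / 4) : ψ = 0 := by
  have hchar (n : ℕ) (t : AddCircle (1 : ℝ)) : ψ (evalChar (Pi.single n 1) t) = 0 :=
    AddCircle.eq_zero_of_forall_norm_zsmul_lt fun k => by
      simpa [← map_zsmul, ← evalChar_zsmul] using hψ n (k • t)
  obtain ⟨W, hW, hWψ⟩ := PontDual.exists_isCompact_apply_eq_zero_of_eqOn ψ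
  obtain ⟨N, hN⟩ := exists_forall_apply_single_eq_zero_of_isCompact hW
  ext χ
  obtain ⟨t, ht⟩ := exists_sum_evalChar_eq χ N
  -- on `W`, `χ` agrees with a sum of characters killed by `ψ`
  let d := ∑ i : Fin N, evalChar (Pi.single (i : ℕ) 1) (t i)
  have hd : ψ d = 0 := by simp [d, map_sum, hchar]
  have hχd : ψ (χ - d) = 0 := hWψ _ fun h hh => by
    rw [Pi.zero_apply, ← PontDual.eval_apply, map_sub, PontDual.eval_apply, ht h (hN h hh)]
    simp [d, map_sum]
  calc ψ χ = ψ (χ - d) + ψ d := by rw [← map_add, sub_add_cancel]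
    _ = 0 := by rw [hχd, hd, add_zero]

theorem isOpen_singleton_zero_bidual :
    IsOpen ({0} : Set (PontDual (PontDual baerSpeckerDual))) := by
  convert (ContinuousMap.isOpen_setOfPred_mapsTo isCompact_evalChar_single
    (Metric.isOpen_ball (x := (0 : AddCircle (1 : ℝ))) (ε := 1 / 4))).preimage
    (ContinuousAddMonoidHom.isInducing_toContinuousMap _ _).continuous using 1
  ext ψ
  refine ⟨fun hψ => ?_, fun hψ => eq_zero_of_forall_norm_apply_evalChar_lt ψ fun n t => ?_⟩
  · rw [Set.mem_singleton_iff.1 hψ]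
    exact fun _ _ => by simp
  · simpa using hψ (Set.mem_insert_of_mem _ ⟨(t, n), rfl⟩)

end baerSpeckerDual

/-- The product `ℤ^(ℤ^ℕ)` of copies of the discrete group `ℤ` indexed by a set of
cardinality continuum contains a countable closed subgroup `H` which is not reflexive:
the canonical evaluation map `α_H : H → H^^`, `h ↦ (χ ↦ χ h)`, into the second
Pontryagin dual of `H` (with the subspace topology on `H`) is not a topological
isomorphism. -/
theorem exists_countable_closed_nonreflexive_subgroup :
    ∃ H : AddSubgroup ((ℕ → ℤ) → ℤ),
      Countable H ∧ IsClosed (H : Set ((ℕ → ℤ) → ℤ)) ∧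
      ¬ ∃ e : H ≃ₜ PontDual (PontDual H),
          ∀ (h : H) (χ : PontDual H), e h χ = χ h := by
  refine ⟨baerSpeckerDual, baerSpeckerDual.countable, baerSpeckerDual.isClosed, ?_⟩
  rintro ⟨e, -⟩
  have := discreteTopology_of_isOpen_singleton_zero baerSpeckerDual.isOpen_singleton_zero_bidual
  exact baerSpeckerDual.not_discreteTopology e.symm.discreteTopology
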